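/- arXiv:2512.24115 — 3 statements merged into one kernel-verified Lean document; each statement's English description precedes it below -/
import Mathlib

section
/- If n ≡ 1 (mod 3) and n ≥ 4, then the number of minimum dominating sets of the path P_n equals (n+2)(n+11)/18 − 1; equivalently, writing n = 3k+1, ζ(P_n) = (k^2 + 5k + 2)/2. -/
open Finset SimpleGraph

/-- `S` is a dominating set of `G`: every vertex outside `S` has a neighbor in `S`. -/
def domSet {V : Type*} (G : SimpleGraph V) (S : Finset V) : Prop :=
  ∀ v, v ∉ S → ∃ u ∈ S, G.Adj u v

/-- The domination number `γ(G)`: least cardinality of a dominating set. -/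
noncomputable def domNum {V : Type*} [Fintype V] (G : SimpleGraph V) : ℕ :=
  sInf {k | ∃ S : Finset V, domSet G S ∧ S.card = k}

/-- The dominion `ζ(G)`: the number of dominating sets of minimum cardinality. -/
noncomputable def dominion {V : Type*} [Fintype V] (G : SimpleGraph V) : ℕ :=
  Nat.card {S : Finset V // domSet G S ∧ S.card = domNum G}

/-!
List a dominating set of the path on `{0, …, 3k}` increasingly as `s₀ < s₁ < ⋯`. Domination
forces `s₀ ≤ 1`, `sᵢ₊₁ ≤ sᵢ + 3` and `s_last + 1 ≥ 3k`, so at least `k + 1` vertices are needed,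
and with exactly `k + 1` of them `sᵢ - 3i ∈ {-1, 0, 1}` is non-increasing in `i`. Such a set is
determined by two thresholds `p ≤ q`: `sᵢ = 3i + 1` for `i < p`, `sᵢ = 3i` for `p ≤ i < q` and
`sᵢ = 3i - 1` for `q ≤ i`. Every pair `0 ≤ p ≤ q ≤ k + 1` occurs except `(0, 0)` and
`(k + 1, k + 1)`, which leaves `(k + 2)(k + 3)/2 - 2 = (k² + 5k + 2)/2` sets.
-/

namespace PathDomination

def PathDominates (T : Finset ℕ) (m : ℕ) : Prop :=
  ∀ v ≤ m, ∃ u ∈ T, v ≤ u + 1 ∧ u ≤ v + 1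

lemma domSet_pathGraph_iff {m : ℕ} {S : Finset (Fin (m + 1))} :
    domSet (pathGraph (m + 1)) S ↔ PathDominates (S.map Fin.valEmbedding) m := by
  constructor
  · intro hS v hv
    by_cases hvS : (⟨v, by omega⟩ : Fin (m + 1)) ∈ S
    · exact ⟨v, mem_map_of_mem _ hvS, by omega, by omega⟩
    · obtain ⟨u, huS, hadj⟩ := hS _ hvS
      simp only [pathGraph_adj] at hadj
      exact ⟨u, mem_map_of_mem _ huS, by omega, by omega⟩
  · intro hT v hv
    obtain ⟨_, hu, hvu, huv⟩ := hT v (Nat.lt_succ_iff.1 v.isLt)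
    obtain ⟨u, huS, rfl⟩ := mem_map.1 hu
    have hne : (u : ℕ) ≠ v := Fin.val_ne_of_ne fun h => hv (h ▸ huS)
    rw [Fin.valEmbedding_apply] at hvu huv
    exact ⟨u, huS, pathGraph_adj.2 (by omega)⟩

section Sequences

variable {s : ℕ → ℕ} {k : ℕ}

lemma le_add_three_mul_sub (hgap : ∀ i < k, s (i + 1) ≤ s i + 3) {i j : ℕ} (hij : i ≤ j)
    (hjk : j ≤ k) : s j ≤ s i + 3 * (j - i) := by
  induction j, hij using Nat.le_induction with
  | base => simp
  | succ j hij ih =>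
    have := hgap j (by omega)
    have := ih (by omega)
    omega

lemma pathDominates_image_range (h0 : s 0 ≤ 1) (hgap : ∀ i < k, s (i + 1) ≤ s i + 3) {m : ℕ}
    (hm : m ≤ s k + 1) : PathDominates ((range (k + 1)).image s) m := by
  induction k generalizing m with
  | zero => exact fun v hv => ⟨s 0, by simp, by omega, by omega⟩
  | succ k ih =>
    intro v hv
    by_cases hvk : v ≤ s k + 1
    · obtain ⟨u, hu, h⟩ := ih (fun i hi => hgap i (by omega)) hvk v le_rfl
      exact ⟨u, image_subset_image (range_subset_range.2 (by omega)) hu, h⟩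
    · have := hgap k (by omega)
      exact ⟨s (k + 1), mem_image_of_mem _ (by simp), by omega, by omega⟩

end Sequences

lemma exists_forall_lt_iff_lt {P : ℕ → Prop} {n : ℕ}
    (hP : ∀ i j, i ≤ j → j < n → P j → P i) : ∃ p ≤ n, ∀ i < n, P i ↔ i < p := by
  classical
  by_cases h : ∃ i, i < n ∧ ¬ P i
  · refine ⟨Nat.find h, (Nat.find_spec h).1.le, fun i hi => ⟨fun hPi => ?_, fun hlt => ?_⟩⟩
    · by_contra! hle
      exact (Nat.find_spec h).2 (hP _ i hle hi hPi)
    · by_contra hPi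
      exact Nat.find_min h hlt ⟨hi, hPi⟩
  · push Not at h
    exact ⟨n, le_rfl, fun i hi => iff_of_true (h i hi) hi⟩

def blockSeq (p q i : ℕ) : ℕ :=
  if i < p then 3 * i + 1 else if i < q then 3 * i else 3 * i - 1

-- `(0, 0)` would use the vertex `-1`, and `(k + 1, k + 1)` the vertex `3k + 1`.
def blockParams (k : ℕ) : Finset (ℕ × ℕ) :=
  (range (k + 2) ×ˢ range (k + 2)).filter (fun x => x.1 ≤ x.2) \ {(0, 0), (k + 1, k + 1)}

lemma mem_blockParams {k : ℕ} {x : ℕ × ℕ} :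
    x ∈ blockParams k ↔ x.1 ≤ x.2 ∧ 1 ≤ x.2 ∧ x.1 ≤ k ∧ x.2 ≤ k + 1 := by
  obtain ⟨p, q⟩ := x
  simp only [blockParams, mem_sdiff, mem_filter, mem_product, mem_range, mem_insert,
    mem_singleton, Prod.mk.injEq]
  omega

lemma exists_blockSeq_eq {s : ℕ → ℕ} {k : ℕ} (h0 : s 0 ≤ 1)
    (hgap : ∀ i < k, s (i + 1) ≤ s i + 3) (hk : 3 * k ≤ s k + 1) (hk' : s k ≤ 3 * k) :
    ∃ x ∈ blockParams k, ∀ i ≤ k, s i = blockSeq x.1 x.2 i := by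
  have hup : ∀ i ≤ k, s i ≤ 3 * i + 1 := fun i hi => by
    have := le_add_three_mul_sub hgap (Nat.zero_le i) hi
    omega
  have hlow : ∀ i ≤ k, 3 * i ≤ s i + 1 := fun i hi => by
    have := le_add_three_mul_sub hgap hi le_rfl
    omega
  obtain ⟨p, hpk1, hp⟩ := exists_forall_lt_iff_lt (P := fun i => 3 * i + 1 ≤ s i) (n := k + 1)
    fun i j hij hj h => by have := le_add_three_mul_sub hgap hij (by omega); omega
  obtain ⟨q, hqk, hq⟩ := exists_forall_lt_iff_lt (P := fun i => 3 * i ≤ s i) (n := k + 1)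
    fun i j hij hj h => by have := le_add_three_mul_sub hgap hij (by omega); omega
  have hpq : p ≤ q := by
    by_contra! h
    have := hp q (by omega)
    have := hq q (by omega)
    omega
  have hq1 : 1 ≤ q := by
    have := hq 0 (by omega)
    omega
  have hpk : p ≤ k := by
    by_contra! h
    have := hp k (by omega)
    omega
  refine ⟨(p, q), mem_blockParams.2 ⟨hpq, hq1, hpk, hqk⟩, fun i hi => ?_⟩
  have := hp i (by omega)
  have := hq i (by omega)
  have := hup i hi
  have := hlow i hi
  unfold blockSeq
  split_ifs <;> omega

lemma blockSeq_strictMono {p q : ℕ} (hpq : p ≤ q) (hq : 1 ≤ q) : StrictMono (blockSeq p q) :=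
  strictMono_nat_of_lt_succ fun i => by unfold blockSeq; split_ifs <;> omega

def blockSet (k p q : ℕ) : Finset ℕ := (range (k + 1)).image (blockSeq p q)

section BlockSet

variable {k : ℕ} {x : ℕ × ℕ}

lemma card_blockSet (hx : x ∈ blockParams k) : #(blockSet k x.1 x.2) = k + 1 := by
  rw [mem_blockParams] at hx
  rw [blockSet, card_image_of_injective _ (blockSeq_strictMono hx.1 hx.2.1).injective,
    card_range]

lemma lt_of_mem_blockSet (hx : x ∈ blockParams k) : ∀ m ∈ blockSet k x.1 x.2, m < 3 * k + 1 := by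
  rw [mem_blockParams] at hx
  simp only [blockSet, mem_image, mem_range]
  rintro _ ⟨i, hi, rfl⟩
  unfold blockSeq
  split_ifs <;> omega

lemma pathDominates_blockSet (hx : x ∈ blockParams k) :
    PathDominates (blockSet k x.1 x.2) (3 * k) := by
  rw [mem_blockParams] at hx
  exact pathDominates_image_range (by unfold blockSeq; split_ifs <;> omega)
    (fun i _ => by unfold blockSeq; split_ifs <;> omega) (by unfold blockSeq; split_ifs <;> omega)

lemma three_mul_add_one_mem_blockSet_iff {p q i : ℕ} (hi : i ≤ k) :
    3 * i + 1 ∈ blockSet k p q ↔ i < p := by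
  simp only [blockSet, mem_image, mem_range]
  constructor
  · rintro ⟨j, -, hj⟩
    unfold blockSeq at hj
    split_ifs at hj <;> omega
  · exact fun h => ⟨i, by omega, by simp [blockSeq, h]⟩

lemma three_mul_mem_blockSet_iff {p q i : ℕ} (hi : i ≤ k) (hq : 1 ≤ q) :
    3 * i ∈ blockSet k p q ↔ p ≤ i ∧ i < q := by
  simp only [blockSet, mem_image, mem_range]
  constructor
  · rintro ⟨j, -, hj⟩
    unfold blockSeq at hj
    split_ifs at hj <;> omega
  · exact fun h => ⟨i, by omega, by simp [blockSeq, h.2, h.1.not_gt]⟩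

lemma blockSet_injOn (k : ℕ) :
    Set.InjOn (fun x : ℕ × ℕ => blockSet k x.1 x.2) (blockParams k) := by
  rintro ⟨p, q⟩ hx ⟨p', q'⟩ hx' h
  simp only [mem_coe, mem_blockParams] at hx hx' h
  have hp : p = p' := by
    have h1 := three_mul_add_one_mem_blockSet_iff (p := p) (q := q) (k := k) (i := min p p')
      (by omega)
    have h2 := three_mul_add_one_mem_blockSet_iff (p := p') (q := q') (k := k) (i := min p p')
      (by omega)
    rw [h] at h1
    have := h1.symm.trans h2
    omega
  subst hp
  have hq : q = q' := by
    by_contra hne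
    have h1 := three_mul_mem_blockSet_iff (p := p) (i := min q q') (k := k) (by omega) hx.2.1
    have h2 := three_mul_mem_blockSet_iff (p := p) (i := min q q') (k := k) (by omega) hx'.2.1
    rw [h] at h1
    have := h1.symm.trans h2
    omega
  rw [hq]

end BlockSet

section Nth

variable (T : Finset ℕ)

lemma image_nth_range_card : (range #T).image (Nat.nth (· ∈ T)) = T := by
  have h := Nat.image_nth_Iio_card (p := (· ∈ T)) T.finite_toSet
  rw [Finset.finite_toSet_toFinset] at h
  apply coe_injective
  rw [coe_image, coe_range, h]
  rfl

lemma nth_mem_of_lt_card {i : ℕ} (hi : i < #T) : Nat.nth (· ∈ T) i ∈ T := by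
  have h := mem_image_of_mem (Nat.nth (· ∈ T)) (mem_range.2 hi)
  rwa [image_nth_range_card] at h

lemma nth_zero_le {a : ℕ} (ha : a ∈ T) : Nat.nth (· ∈ T) 0 ≤ a := by
  rw [Nat.nth_zero]
  exact Nat.sInf_le ha

lemma le_nth_of_mem {a k : ℕ} (ha : a ∈ T) (hk : #T = k + 1) : a ≤ Nat.nth (· ∈ T) k := by
  rw [← image_nth_range_card T, mem_image] at ha
  obtain ⟨j, hj, rfl⟩ := ha
  rw [mem_range] at hj
  exact Nat.nth_le_nth_of_lt_card (p := (· ∈ T)) T.finite_toSet (by omega) (by simp; omega)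

end Nth

lemma nth_gaps_of_pathDominates {T : Finset ℕ} {m k : ℕ} (hT : ∀ u ∈ T, u ≤ m)
    (hdom : PathDominates T m) (hk : #T = k + 1) :
    Nat.nth (· ∈ T) 0 ≤ 1 ∧ (∀ i < k, Nat.nth (· ∈ T) (i + 1) ≤ Nat.nth (· ∈ T) i + 3) ∧
      m ≤ Nat.nth (· ∈ T) k + 1 := by
  refine ⟨?_, fun i hi => ?_, ?_⟩
  · obtain ⟨u, hu, -, hu1⟩ := hdom 0 (Nat.zero_le m)
    have := nth_zero_le T hu
    omega
  · by_contra! hgap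
    have hs := hT _ (nth_mem_of_lt_card T (by omega : i + 1 < #T))
    obtain ⟨u, hu, h1, h2⟩ := hdom (Nat.nth (· ∈ T) i + 2) (by omega)
    have := Nat.le_nth_of_lt_nth_succ (by omega : u < Nat.nth (· ∈ T) (i + 1)) hu
    omega
  · obtain ⟨u, hu, h1, -⟩ := hdom m le_rfl
    have := le_nth_of_mem T hu hk
    omega

lemma add_one_le_three_mul_card {T : Finset ℕ} {m : ℕ} (hT : ∀ u ∈ T, u ≤ m)
    (hdom : PathDominates T m) : m + 1 ≤ 3 * #T := by
  obtain ⟨u, hu, -⟩ := hdom 0 (Nat.zero_le m)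
  obtain ⟨k, hk⟩ := Nat.exists_eq_add_of_lt (card_pos.2 ⟨u, hu⟩)
  obtain ⟨h0, hgap, hlast⟩ := nth_gaps_of_pathDominates hT hdom (k := k) (by omega)
  have := le_add_three_mul_sub hgap (Nat.zero_le k) le_rfl
  omega

lemma exists_blockSet_eq {T : Finset ℕ} {k : ℕ} (hT : ∀ u ∈ T, u ≤ 3 * k)
    (hdom : PathDominates T (3 * k)) (hk : #T = k + 1) :
    ∃ x ∈ blockParams k, blockSet k x.1 x.2 = T := by
  obtain ⟨h0, hgap, hlast⟩ := nth_gaps_of_pathDominates hT hdom hk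
  obtain ⟨x, hx, hs⟩ :=
    exists_blockSeq_eq h0 hgap hlast (hT _ (nth_mem_of_lt_card T (by omega)))
  refine ⟨x, hx, ?_⟩
  calc blockSet k x.1 x.2 = (range (k + 1)).image (Nat.nth (· ∈ T)) :=
        image_congr fun i hi => (hs i (Nat.lt_succ_iff.1 (mem_range.1 hi))).symm
    _ = T := by rw [← hk, image_nth_range_card]

lemma le_of_mem_map_valEmbedding {m u : ℕ} {S : Finset (Fin (m + 1))}
    (hu : u ∈ S.map Fin.valEmbedding) : u ≤ m := by
  obtain ⟨v, -, rfl⟩ := mem_map.1 hu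
  exact Nat.lt_succ_iff.1 v.isLt

lemma exists_blockSet_eq_map {k : ℕ} {S : Finset (Fin (3 * k + 1))}
    (hS : domSet (pathGraph (3 * k + 1)) S) (hcard : #S = k + 1) :
    ∃ x ∈ blockParams k, blockSet k x.1 x.2 = S.map Fin.valEmbedding := by
  rw [domSet_pathGraph_iff] at hS
  exact exists_blockSet_eq (fun _ => le_of_mem_map_valEmbedding) hS (by rw [card_map, hcard])

lemma exists_map_eq_blockSet {k : ℕ} {x : ℕ × ℕ} (hx : x ∈ blockParams k) :
    ∃ S : Finset (Fin (3 * k + 1)), (domSet (pathGraph (3 * k + 1)) S ∧ #S = k + 1) ∧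
      S.map Fin.valEmbedding = blockSet k x.1 x.2 := by
  have hlt := lt_of_mem_blockSet hx
  refine ⟨(blockSet k x.1 x.2).attachFin hlt, ⟨?_, ?_⟩, map_valEmbedding_attachFin hlt⟩
  · rw [domSet_pathGraph_iff, map_valEmbedding_attachFin]
    exact pathDominates_blockSet hx
  · rw [card_attachFin, card_blockSet hx]

lemma domNum_pathGraph (k : ℕ) : domNum (pathGraph (3 * k + 1)) = k + 1 := by
  obtain ⟨S, hS, -⟩ :=
    exists_map_eq_blockSet (k := k) (x := (k, k + 1)) (mem_blockParams.2 (by omega))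
  refine le_antisymm (Nat.sInf_le ⟨S, hS⟩) (le_csInf ⟨_, S, hS⟩ ?_)
  rintro _ ⟨S, hS, rfl⟩
  rw [domSet_pathGraph_iff] at hS
  have := add_one_le_three_mul_card (fun _ => le_of_mem_map_valEmbedding) hS
  rw [card_map] at this
  omega

open Classical in
lemma image_map_valEmbedding_filter_domSet (k : ℕ) :
    ((univ : Finset (Finset (Fin (3 * k + 1)))).filter
        (fun S => domSet (pathGraph (3 * k + 1)) S ∧ #S = k + 1)).image (·.map Fin.valEmbedding) =
      (blockParams k).image (fun x => blockSet k x.1 x.2) := by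
  ext T
  simp only [mem_image, mem_filter, mem_univ, true_and]
  constructor
  · rintro ⟨S, ⟨hS, hcard⟩, rfl⟩
    exact exists_blockSet_eq_map hS hcard
  · rintro ⟨x, hx, rfl⟩
    exact exists_map_eq_blockSet hx

lemma dominion_pathGraph (k : ℕ) : dominion (pathGraph (3 * k + 1)) = #(blockParams k) := by
  classical
  rw [dominion, domNum_pathGraph, Nat.card_eq_fintype_card, Fintype.card_subtype,
    ← card_image_of_injective _ (Finset.map_injective Fin.valEmbedding),
    image_map_valEmbedding_filter_domSet, card_image_of_injOn (blockSet_injOn k)]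

lemma two_mul_card_filter_fst_le_snd (m : ℕ) :
    2 * #((range m ×ˢ range m).filter (fun x : ℕ × ℕ => x.1 ≤ x.2)) = m * (m + 1) := by
  rw [card_filter, sum_product_right]
  have hrow : ∀ q ∈ range m, ∑ p ∈ range m, (if p ≤ q then 1 else 0) = q + 1 := by
    intro q hq
    have : (range m).filter (· ≤ q) = range (q + 1) := by
      ext p
      simp only [mem_filter, mem_range] at hq ⊢
      omega
    rw [← card_filter, this, card_range]
  rw [sum_congr rfl hrow, sum_add_distrib, sum_const, card_range, smul_eq_mul, mul_one]
  rcases m with _ | m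
  · rfl
  · have := sum_range_id_mul_two (m + 1)
    rw [Nat.add_sub_cancel] at this
    linarith

lemma two_mul_card_blockParams (k : ℕ) : 2 * #(blockParams k) = k ^ 2 + 5 * k + 2 := by
  have hsub : ({(0, 0), (k + 1, k + 1)} : Finset (ℕ × ℕ)) ⊆
      (range (k + 2) ×ˢ range (k + 2)).filter (fun x => x.1 ≤ x.2) := by
    intro x hx
    simp only [mem_insert, mem_singleton] at hx
    rcases hx with rfl | rfl <;> simp
  have hpairs := two_mul_card_filter_fst_le_snd (k + 2)
  have hpoly : (k + 2) * (k + 2 + 1) = k ^ 2 + 5 * k + 2 + 4 := by ring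
  rw [blockParams, card_sdiff_of_subset hsub, card_pair (by simp)]
  omega

end PathDomination

theorem stmt8_general (n k : ℕ) (hn : n = 3 * k + 1) :
    dominion (pathGraph n) = (n + 2) * (n + 11) / 18 - 1 ∧
    dominion (pathGraph n) = (k ^ 2 + 5 * k + 2) / 2 := by
  subst hn
  have hcount := PathDomination.two_mul_card_blockParams k
  rw [PathDomination.dominion_pathGraph]
  refine ⟨?_, by omega⟩
  have hsq : (3 * k + 1 + 2) * (3 * k + 1 + 11) = 9 * (k ^ 2 + 5 * k + 2) + 18 := by ring
  rw [hsq]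
  omega

theorem stmt8 (n k : ℕ) (hk : 1 ≤ k) (hn : n = 3 * k + 1) :
    dominion (pathGraph n) = (n + 2) * (n + 11) / 18 - 1 ∧
    dominion (pathGraph n) = (k ^ 2 + 5 * k + 2) / 2 :=
  stmt8_general n k hn
end

section
/- If n = 3k + 2 with k ≥ 1, then no minimum dominating set of the path P_n contains the vertex v_3. -/
open Finset SimpleGraph

/-!
Vertex `i : Fin n` of `pathGraph n` is `v_{i+1}`. Taking every third vertex shows
`γ(P_{3k+2}) ≤ k + 1`. If a minimum dominating set `S` contains `v_3`, then `S` also contains `v_1` or `v_2` (to dominate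
`v_1`), so at least two of its vertices lie in `{v_1, v_2, v_3}`. The `3k - 2` vertices
`v_5, …, v_n` can only be dominated by vertices of `S` from `v_4` on, each of which dominates at
most three vertices, so there are at least `k` of those and `|S| ≥ k + 2`.
-/

theorem SimpleGraph.card_le_mul_card_of_forall_mem_or_adj {V : Type*} [DecidableEq V]
    (G : SimpleGraph V) [G.LocallyFinite] {d : ℕ} (hdeg : ∀ v, G.degree v ≤ d)
    {A T : Finset V} (hT : ∀ v ∈ T, v ∈ A ∨ ∃ u ∈ A, G.Adj u v) :
    #T ≤ (d + 1) * #A := by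
  have hcover : T ⊆ A.biUnion fun u ↦ insert u (G.neighborFinset u) := by
    intro v hv
    rcases hT v hv with hvA | ⟨u, huA, huv⟩
    · exact mem_biUnion.2 ⟨v, hvA, mem_insert_self v _⟩
    · exact mem_biUnion.2 ⟨u, huA, mem_insert_of_mem ((G.mem_neighborFinset u v).2 huv)⟩
  calc #T ≤ #(A.biUnion fun u ↦ insert u (G.neighborFinset u)) := card_le_card hcover
    _ ≤ ∑ u ∈ A, #(insert u (G.neighborFinset u)) := card_biUnion_le
    _ ≤ ∑ _u ∈ A, (d + 1) := sum_le_sum fun u _ ↦ (card_insert_le _ _).trans <| by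
        rw [card_neighborFinset_eq_degree]; exact Nat.succ_le_succ (hdeg u)
    _ = (d + 1) * #A := by rw [sum_const, smul_eq_mul, mul_comm]

theorem SimpleGraph.pathGraph_degree_le_two {n : ℕ} [DecidableRel (pathGraph n).Adj]
    (u : Fin n) : (pathGraph n).degree u ≤ 2 := by
  rw [← card_neighborFinset_eq_degree]
  refine (card_le_card_of_injOn Fin.val (t := ({(u : ℕ) - 1, (u : ℕ) + 1} : Finset ℕ)) ?_
    Fin.val_injective.injOn).trans card_le_two
  intro v hv
  rw [mem_coe, mem_neighborFinset, pathGraph_adj] at hv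
  simp only [mem_coe, mem_insert, mem_singleton]
  omega

theorem domSet.domNum_le_card {V : Type*} [Fintype V] {G : SimpleGraph V} {S : Finset V}
    (hS : domSet G S) : domNum G ≤ #S :=
  Nat.sInf_le ⟨S, hS, rfl⟩

def pathGraphEveryThird (n : ℕ) : Finset (Fin n) :=
  univ.image fun i : Fin ((n + 2) / 3) ↦ ⟨min (3 * i + 1) (n - 1), by omega⟩

theorem domSet_pathGraphEveryThird (n : ℕ) : domSet (pathGraph n) (pathGraphEveryThird n) := by
  intro v hv
  simp only [pathGraphEveryThird, mem_image, mem_univ, true_and, not_exists] at hv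
  -- `v` is within distance one of `min (3 * (v / 3) + 1) (n - 1)`, and not equal to it.
  have hne := hv ⟨v / 3, by omega⟩
  refine ⟨_, mem_image_of_mem _ (mem_univ ⟨v / 3, by omega⟩), ?_⟩
  simp only [Fin.ext_iff] at hne
  simp only [pathGraph_adj]
  omega

theorem domNum_pathGraph_le (n : ℕ) : domNum (pathGraph n) ≤ (n + 2) / 3 :=
  (domSet_pathGraphEveryThird n).domNum_le_card.trans (card_image_le.trans (by simp))

theorem domSet.exists_mem_val_le_one {n : ℕ} {S : Finset (Fin n)} (hS : domSet (pathGraph n) S)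
    (hn : 0 < n) : ∃ w ∈ S, w.val ≤ 1 := by
  by_cases h0 : (⟨0, hn⟩ : Fin n) ∈ S
  · exact ⟨_, h0, Nat.zero_le 1⟩
  · obtain ⟨u, huS, hu⟩ := hS _ h0
    simp only [pathGraph_adj] at hu
    exact ⟨u, huS, by omega⟩

theorem domSet.card_Ioi_le {n : ℕ} {S : Finset (Fin n)} (hS : domSet (pathGraph n) S)
    (i : Fin n) : n - 1 - i ≤ 3 * #{u ∈ S | i ≤ u} := by
  classical
  rw [← Fin.card_Ioi]
  refine (pathGraph n).card_le_mul_card_of_forall_mem_or_adj pathGraph_degree_le_two fun v hv ↦ ?_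
  rw [mem_Ioi] at hv
  by_cases hvS : v ∈ S
  · exact .inl (mem_filter.2 ⟨hvS, hv.le⟩)
  · obtain ⟨u, huS, hu⟩ := hS v hvS
    have hiu : i ≤ u := by
      rw [Fin.lt_def] at hv
      rw [pathGraph_adj] at hu
      rw [Fin.le_def]
      omega
    exact .inr ⟨u, mem_filter.2 ⟨huS, hiu⟩, hu⟩

theorem stmt9 (n k : ℕ) (hk : 1 ≤ k) (hn : n = 3 * k + 2) (S : Finset (Fin n))
    (hS : domSet (pathGraph n) S) (hcard : S.card = domNum (pathGraph n)) :
    (⟨2, by omega⟩ : Fin n) ∉ S := by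
  intro h2
  let i : Fin n := ⟨3, by omega⟩
  obtain ⟨w, hwS, hw⟩ := hS.exists_mem_val_le_one (by omega)
  have hlow : 1 < #{u ∈ S | ¬ i ≤ u} := by
    refine one_lt_card.2 ⟨w, mem_filter.2 ⟨hwS, ?_⟩, _, mem_filter.2 ⟨h2, ?_⟩, ?_⟩ <;>
      simp only [i, Fin.le_def, ne_eq, Fin.ext_iff] <;> omega
  have hhigh : n - 4 ≤ 3 * #{u ∈ S | i ≤ u} := hS.card_Ioi_le i
  have hsplit := card_filter_add_card_filter_not (s := S) (i ≤ ·)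
  have hupper := domNum_pathGraph_le n
  omega
end

section
/- If n ≡ 2 (mod 3) and n ≥ 5, then the number of minimum dominating sets of the cycle C_n equals n. -/
open Finset SimpleGraph

/-!
Write `n = 3k + 2`. In a `d`-regular graph, counting the pairs `(v, u)` with `u ∈ S ∩ N[v]`
gives `∑ v, #(S ∩ N[v]) = (d + 1) #S`; for a dominating set every term is positive, so
`n ≤ 3 #S` in the cycle, and `γ(C_n) = k + 1`, attained by the progressions `a, a + 3, …, a + 3k`.
For a dominating set of size `k + 1` the count is `n + 1`, so exactly one vertex is dominated
twice. Hence `S` has no two adjacent vertices and exactly one pair `b, b + 2`; walking from `b + 2`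
in steps of `3` recovers `S` as the progression starting at `b + 2`. The `n` progressions are
distinct, so `ζ(C_n) = n`.
-/

namespace SimpleGraph

variable {V : Type*} [Fintype V] [DecidableEq V] {G : SimpleGraph V} [DecidableRel G.Adj]

variable (G) in
def closedNbhd (v : V) : Finset V := insert v (G.neighborFinset v)

lemma mem_closedNbhd {u v : V} : u ∈ G.closedNbhd v ↔ u = v ∨ G.Adj v u := by
  simp [closedNbhd]

lemma mem_closedNbhd_comm {u v : V} : u ∈ G.closedNbhd v ↔ v ∈ G.closedNbhd u := by
  simp only [mem_closedNbhd, G.adj_comm, eq_comm]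

lemma card_closedNbhd (v : V) : #(G.closedNbhd v) = G.degree v + 1 := by
  rw [closedNbhd, card_insert_of_notMem (by simp), card_neighborFinset_eq_degree]

lemma domSet_iff_forall_inter_closedNbhd_nonempty {S : Finset V} :
    domSet G S ↔ ∀ v, (S ∩ G.closedNbhd v).Nonempty := by
  simp only [domSet, Finset.Nonempty, mem_inter, mem_closedNbhd]
  refine forall_congr' fun v => ⟨fun h => ?_, fun h hv => ?_⟩
  · by_cases hv : v ∈ S
    · exact ⟨v, hv, .inl rfl⟩
    · obtain ⟨u, hu, huv⟩ := h hv
      exact ⟨u, hu, .inr huv.symm⟩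
  · obtain ⟨u, hu, rfl | hvu⟩ := h
    · exact absurd hu hv
    · exact ⟨u, hu, hvu.symm⟩

lemma one_lt_card_inter_closedNbhd {S : Finset V} {v x y : V} (hxy : x ≠ y)
    (hx : x ∈ S ∩ G.closedNbhd v) (hy : y ∈ S ∩ G.closedNbhd v) :
    1 < #(S ∩ G.closedNbhd v) :=
  one_lt_card.2 ⟨x, hx, y, hy, hxy⟩

lemma sum_card_inter_closedNbhd (S : Finset V) :
    ∑ v, #(S ∩ G.closedNbhd v) = ∑ u ∈ S, (G.degree u + 1) := by
  calc ∑ v, #(S ∩ G.closedNbhd v)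
      = ∑ v, ∑ u ∈ S, if u ∈ G.closedNbhd v then 1 else 0 := by
        simp_rw [sum_boole, filter_mem_eq_inter, Nat.cast_id]
    _ = ∑ u ∈ S, ∑ v, if v ∈ G.closedNbhd u then 1 else 0 := by
        rw [sum_comm]; simp_rw [mem_closedNbhd_comm]
    _ = ∑ u ∈ S, (G.degree u + 1) := by
        simp_rw [sum_boole, filter_mem_eq_inter, univ_inter, Nat.cast_id, card_closedNbhd]

namespace IsRegularOfDegree

variable {d : ℕ} {S : Finset V}

lemma sum_card_inter_closedNbhd_eq (hG : G.IsRegularOfDegree d) (S : Finset V) :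
    ∑ v, #(S ∩ G.closedNbhd v) = (d + 1) * #S := by
  rw [G.sum_card_inter_closedNbhd, sum_congr rfl fun u _ => by rw [hG.degree_eq], sum_const,
    smul_eq_mul, mul_comm]

lemma card_le_mul_card_of_domSet (hG : G.IsRegularOfDegree d) (hS : domSet G S) :
    Fintype.card V ≤ (d + 1) * #S := by
  rw [← hG.sum_card_inter_closedNbhd_eq, ← card_univ, card_eq_sum_ones]
  exact sum_le_sum fun v _ => (domSet_iff_forall_inter_closedNbhd_nonempty.1 hS v).card_pos

lemma exists_one_lt_card_inter_closedNbhd (hG : G.IsRegularOfDegree d)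
    (h : Fintype.card V < (d + 1) * #S) : ∃ v, 1 < #(S ∩ G.closedNbhd v) := by
  by_contra! hle
  have := sum_le_card_nsmul univ _ 1 fun v _ => hle v
  rw [hG.sum_card_inter_closedNbhd_eq, card_univ, smul_eq_mul, mul_one] at this
  omega

lemma eq_of_one_lt_card_inter_closedNbhd (hG : G.IsRegularOfDegree d)
    (h : (d + 1) * #S = Fintype.card V + 1) (hS : domSet G S) {v w : V}
    (hv : 1 < #(S ∩ G.closedNbhd v)) (hw : 1 < #(S ∩ G.closedNbhd w)) : v = w := by
  by_contra hvw
  have hw' : w ∈ univ.erase v := mem_erase.2 ⟨Ne.symm hvw, mem_univ w⟩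
  have hrest := card_nsmul_le_sum ((univ.erase v).erase w) (fun x => #(S ∩ G.closedNbhd x)) 1
    fun x _ => (domSet_iff_forall_inter_closedNbhd_nonempty.1 hS x).card_pos
  have hsum := hG.sum_card_inter_closedNbhd_eq S
  rw [← add_sum_erase _ _ (mem_univ v), ← add_sum_erase _ _ hw'] at hsum
  rw [card_erase_of_mem hw', card_erase_of_mem (mem_univ v), card_univ, smul_eq_mul,
    mul_one] at hrest
  have : 2 ≤ Fintype.card V := by
    rw [← card_univ]; exact one_lt_card.2 ⟨v, mem_univ v, w, mem_univ w, hvw⟩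
  omega

end IsRegularOfDegree

end SimpleGraph

section Cycle

open Fin.CommRing

lemma Fin.natCast_ne_zero_of_pos_of_lt {m n : ℕ} [NeZero n] (h0 : 0 < m) (hm : m < n) :
    (m : Fin n) ≠ 0 := by
  rw [Ne, Fin.natCast_eq_zero]
  exact fun h => h0.ne' (Nat.eq_zero_of_dvd_of_lt h hm)

lemma cycleGraph_isRegularOfDegree_two {n : ℕ} (hn : 3 ≤ n) :
    (cycleGraph n).IsRegularOfDegree 2 := by
  obtain ⟨m, rfl⟩ : ∃ m, n = m + 3 := ⟨n - 3, by omega⟩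
  exact fun _ => cycleGraph_degree_three_le

lemma mem_closedNbhd_cycleGraph {n : ℕ} {u v : Fin (n + 2)} :
    u ∈ (cycleGraph (n + 2)).closedNbhd v ↔ u = v - 1 ∨ u = v ∨ u = v + 1 := by
  rw [mem_closedNbhd, ← mem_neighborSet, cycleGraph_neighborSet]
  simp only [Set.mem_insert_iff, Set.mem_singleton_iff]
  tauto

variable {k : ℕ}

def progression (a : Fin (3 * k + 2)) : Finset (Fin (3 * k + 2)) :=
  (range (k + 1)).image fun i => a + ((3 * i : ℕ) : Fin (3 * k + 2))

lemma mem_progression {a v : Fin (3 * k + 2)} :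
    v ∈ progression a ↔ ∃ i ≤ k, v = a + ((3 * i : ℕ) : Fin (3 * k + 2)) := by
  simp only [progression, mem_image, mem_range, Nat.lt_succ_iff, eq_comm (a := v)]

lemma card_progression (a : Fin (3 * k + 2)) : #(progression a) = k + 1 := by
  rw [progression, card_image_of_injOn, card_range]
  intro i hi j hj h
  simp only [coe_range, Set.mem_Iio] at hi hj
  have := CharP.natCast_injOn_Iio (Fin (3 * k + 2)) (3 * k + 2) (by simp only [Set.mem_Iio]; omega)
    (by simp only [Set.mem_Iio]; omega) (add_left_cancel h)
  omega

lemma domSet_progression (a : Fin (3 * k + 2)) :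
    domSet (cycleGraph (3 * k + 2)) (progression a) := by
  rw [domSet_iff_forall_inter_closedNbhd_nonempty]
  intro v
  set t := (v - a).val
  have hv : v = a + (t : Fin (3 * k + 2)) := by simp [t]
  obtain ⟨i, hi, hit⟩ : ∃ i ≤ k, 3 * i = t + 1 ∨ 3 * i = t ∨ 3 * i + 1 = t :=
    ⟨(t + 1) / 3, by omega, by omega⟩
  refine ⟨a + ((3 * i : ℕ) : Fin (3 * k + 2)),
    mem_inter.2 ⟨mem_progression.2 ⟨i, hi, rfl⟩, mem_closedNbhd_cycleGraph.2 ?_⟩⟩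
  rw [hv]
  rcases hit with h | h | h
  · right; right; rw [h]; push_cast; ring
  · right; left; rw [h]
  · left; rw [← h]; push_cast; ring

lemma self_mem_progression (a : Fin (3 * k + 2)) : a ∈ progression a :=
  mem_progression.2 ⟨0, k.zero_le, by simp⟩

lemma sub_two_mem_progression (a : Fin (3 * k + 2)) : a - 2 ∈ progression a := by
  refine mem_progression.2 ⟨k, le_rfl, ?_⟩
  have := Fin.natCast_self (3 * k + 2)
  push_cast at this ⊢
  linear_combination -this

lemma domNum_cycleGraph (hk : 1 ≤ k) : domNum (cycleGraph (3 * k + 2)) = k + 1 := by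
  refine le_antisymm (Nat.sInf_le ⟨progression 0, domSet_progression 0, card_progression 0⟩) ?_
  refine le_csInf ⟨_, progression 0, domSet_progression 0, card_progression 0⟩ ?_
  rintro m ⟨S, hS, rfl⟩
  have := (cycleGraph_isRegularOfDegree_two (by omega)).card_le_mul_card_of_domSet hS
  rw [Fintype.card_fin] at this
  omega

lemma eq_of_one_lt_card_inter_closedNbhd_cycleGraph (hk : 1 ≤ k) {S : Finset (Fin (3 * k + 2))}
    (hS : domSet (cycleGraph (3 * k + 2)) S) (hcard : #S = k + 1) {v w : Fin (3 * k + 2)}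
    (hv : 1 < #(S ∩ (cycleGraph (3 * k + 2)).closedNbhd v))
    (hw : 1 < #(S ∩ (cycleGraph (3 * k + 2)).closedNbhd w)) : v = w :=
  (cycleGraph_isRegularOfDegree_two (by omega)).eq_of_one_lt_card_inter_closedNbhd
    (by rw [hcard, Fintype.card_fin]; ring) hS hv hw

lemma add_one_notMem (hk : 1 ≤ k) {S : Finset (Fin (3 * k + 2))}
    (hS : domSet (cycleGraph (3 * k + 2)) S) (hcard : #S = k + 1) {u : Fin (3 * k + 2)}
    (hu : u ∈ S) : u + 1 ∉ S := by
  intro hu1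
  have hne : u ≠ u + 1 := by
    have h1 := Fin.natCast_ne_zero_of_pos_of_lt (n := 3 * k + 2) one_pos (by omega)
    rw [Nat.cast_one] at h1
    exact fun h => h1 (by linear_combination -h)
  refine hne (eq_of_one_lt_card_inter_closedNbhd_cycleGraph hk hS hcard
    (one_lt_card_inter_closedNbhd hne ?_ ?_) (one_lt_card_inter_closedNbhd hne ?_ ?_)) <;>
  simp only [mem_inter, mem_closedNbhd_cycleGraph, add_sub_cancel_right, true_or, or_true, and_true,
    hu, hu1]

lemma one_lt_card_inter_closedNbhd_add_one (hk : 1 ≤ k) {S : Finset (Fin (3 * k + 2))}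
    {b : Fin (3 * k + 2)} (hb : b ∈ S) (hb2 : b + 2 ∈ S) :
    1 < #(S ∩ (cycleGraph (3 * k + 2)).closedNbhd (b + 1)) := by
  have hne : b ≠ b + 2 := by
    have h2 := Fin.natCast_ne_zero_of_pos_of_lt (n := 3 * k + 2) two_pos (by omega)
    rw [Nat.cast_ofNat] at h2
    exact fun h => h2 (by linear_combination -h)
  refine one_lt_card_inter_closedNbhd hne (mem_inter.2 ⟨hb, mem_closedNbhd_cycleGraph.2 ?_⟩)
    (mem_inter.2 ⟨hb2, mem_closedNbhd_cycleGraph.2 ?_⟩)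
  · left; ring
  · right; right; ring

lemma eq_of_mem_add_two_mem (hk : 1 ≤ k) {S : Finset (Fin (3 * k + 2))}
    (hS : domSet (cycleGraph (3 * k + 2)) S) (hcard : #S = k + 1) {b b' : Fin (3 * k + 2)}
    (hb : b ∈ S) (hb2 : b + 2 ∈ S) (hb' : b' ∈ S) (hb2' : b' + 2 ∈ S) : b = b' :=
  add_right_cancel (eq_of_one_lt_card_inter_closedNbhd_cycleGraph hk hS hcard
    (one_lt_card_inter_closedNbhd_add_one hk hb hb2)
    (one_lt_card_inter_closedNbhd_add_one hk hb' hb2'))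

lemma exists_mem_add_two_mem (hk : 1 ≤ k) {S : Finset (Fin (3 * k + 2))}
    (hS : domSet (cycleGraph (3 * k + 2)) S) (hcard : #S = k + 1) : ∃ b ∈ S, b + 2 ∈ S := by
  obtain ⟨v, hv⟩ :=
    (cycleGraph_isRegularOfDegree_two (by omega)).exists_one_lt_card_inter_closedNbhd (S := S)
      (by rw [hcard, Fintype.card_fin]; omega)
  obtain ⟨x, hx, y, hy, hxy⟩ := one_lt_card.1 hv
  rw [mem_inter, mem_closedNbhd_cycleGraph] at hx hy
  have hadj : ∀ u ∈ S, u + 1 ∉ S := fun u hu => add_one_notMem hk hS hcard hu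
  -- two distinct non-adjacent members of `{v - 1, v, v + 1}` must be `v - 1` and `v + 1`
  rcases hx with ⟨hxS, rfl | rfl | rfl⟩ <;> rcases hy with ⟨hyS, rfl | rfl | rfl⟩ <;>
    first
    | exact absurd rfl hxy
    | (refine ⟨_, hxS, ?_⟩; convert hyS using 1; ring1)
    | (refine ⟨_, hyS, ?_⟩; convert hxS using 1; ring1)
    | (refine (hadj _ hxS ?_).elim; convert hyS using 1 <;> ring1)
    | (refine (hadj _ hyS ?_).elim; convert hxS using 1 <;> ring1)

lemma eq_progression (hk : 1 ≤ k) {S : Finset (Fin (3 * k + 2))}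
    (hS : domSet (cycleGraph (3 * k + 2)) S) (hcard : #S = k + 1) {b : Fin (3 * k + 2)}
    (hb : b ∈ S) (hb2 : b + 2 ∈ S) : S = progression (b + 2) := by
  -- `u ∈ S` forces `u + 1 ∉ S` and, as `b` starts the only pair at distance `2`, `u + 2 ∉ S`;
  -- so `u + 2` is dominated by `u + 3`
  have hmem : ∀ i ≤ k, b + 2 + ((3 * i : ℕ) : Fin (3 * k + 2)) ∈ S := by
    intro i
    induction i with
    | zero => intro _; simpa using hb2
    | succ i ih =>
      intro hi
      set u := b + 2 + ((3 * i : ℕ) : Fin (3 * k + 2)) with hu_def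
      have hu : u ∈ S := ih (by omega)
      have hu2 : u + 2 ∉ S := by
        intro h
        have hub := eq_of_mem_add_two_mem hk hS hcard hu h hb hb2
        refine Fin.natCast_ne_zero_of_pos_of_lt (n := 3 * k + 2) (m := 3 * i + 2) (by omega)
          (by omega) ?_
        rw [hu_def] at hub
        push_cast at hub ⊢
        linear_combination hub
      obtain ⟨w, hw⟩ := domSet_iff_forall_inter_closedNbhd_nonempty.1 hS (u + 2)
      rw [mem_inter, mem_closedNbhd_cycleGraph] at hw
      obtain ⟨hwS, rfl | rfl | rfl⟩ := hw
      · exact absurd (by convert hwS using 1; ring) (add_one_notMem hk hS hcard hu)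
      · exact absurd hwS hu2
      · convert hwS using 1
        rw [hu_def]
        push_cast
        ring
  refine (eq_of_subset_of_card_le (fun v hv => ?_) (by rw [hcard, card_progression])).symm
  obtain ⟨i, hi, rfl⟩ := mem_progression.1 hv
  exact hmem i hi

lemma progression_injective (hk : 1 ≤ k) :
    Function.Injective (progression : Fin (3 * k + 2) → Finset (Fin (3 * k + 2))) := by
  intro a a' h
  have ha' := sub_two_mem_progression a'
  have ha'2 : a' - 2 + 2 ∈ progression a' := by simpa using self_mem_progression a'
  rw [← h] at ha' ha'2
  exact sub_left_inj.1 (eq_of_mem_add_two_mem hk (domSet_progression a) (card_progression a)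
    (sub_two_mem_progression a) (by simpa using self_mem_progression a) ha' ha'2)

lemma exists_progression_eq (hk : 1 ≤ k) {S : Finset (Fin (3 * k + 2))}
    (hS : domSet (cycleGraph (3 * k + 2)) S) (hcard : #S = k + 1) : ∃ a, progression a = S := by
  obtain ⟨b, hb, hb2⟩ := exists_mem_add_two_mem hk hS hcard
  exact ⟨b + 2, (eq_progression hk hS hcard hb hb2).symm⟩

lemma dominion_cycleGraph (hk : 1 ≤ k) : dominion (cycleGraph (3 * k + 2)) = 3 * k + 2 := by
  have hdom := domNum_cycleGraph hk
  let f (a : Fin (3 * k + 2)) : {S // domSet (cycleGraph (3 * k + 2)) S ∧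
      #S = domNum (cycleGraph (3 * k + 2))} :=
    ⟨progression a, domSet_progression a, by rw [card_progression, hdom]⟩
  have hf : Function.Bijective f := by
    refine ⟨fun a a' h => progression_injective hk (congrArg Subtype.val h), ?_⟩
    rintro ⟨S, hS, hcard⟩
    obtain ⟨a, rfl⟩ := exists_progression_eq hk hS (hcard.trans hdom)
    exact ⟨a, rfl⟩
  rw [dominion, ← Nat.card_eq_of_bijective f hf, Nat.card_fin]

end Cycle

theorem stmt13 (n : ℕ) (hn : 5 ≤ n) (hmod : n % 3 = 2) :
    dominion (cycleGraph n) = n := by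
  obtain ⟨k, rfl⟩ : ∃ k, n = 3 * k + 2 := ⟨n / 3, by omega⟩
  exact dominion_cycleGraph (by omega)
end
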